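/- arXiv:1005.2836 — 2 statements merged into one kernel-verified Lean document; each statement's English description precedes it below -/
import Mathlib

section
/- Let $\Gamma$ be an infinite group, $\Lambda = \mathbb{Q}\Gamma$, and $R$ any $\mathbb{Q}\Gamma$-module. Then the $\Gamma$-invariants of $R \otimes_{\mathbb{Q}} \Lambda$ with the diagonal $\Gamma$-action vanish: $(R \otimes_{\mathbb{Q}} \Lambda)^\Gamma = 0$. -/
/-!
An invariant vector `x` of `R ⊗ ℚΓ`, written as a finitely supported function
`c : Γ →₀ R` (`x = ∑ c γ ⊗ γ`), satisfies `c (g * γ) = ρ g (c γ)`. Since each `ρ g` is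
injective, a single nonzero coefficient `c γ` forces the whole orbit `Γ * γ` into the
support of `c`, which is impossible when `Γ` is infinite.
-/

open TensorProduct

namespace Representation

variable {k G V : Type*} [CommRing k] [Group G] [AddCommGroup V] [Module k V]

variable (k G V) in
open scoped Classical in
noncomputable def tensorRegularCoeff : V ⊗[k] MonoidAlgebra k G ≃ₗ[k] (G →₀ V) :=
  (MonoidAlgebra.coeffLinearEquiv k).lTensor V ≪≫ₗ finsuppScalarRight k k V G

lemma tensorRegularCoeff_tprod_ofMulAction (ρ : Representation k G V) (g : G)
    (x : V ⊗[k] MonoidAlgebra k G) (γ : G) :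
    tensorRegularCoeff k G V (ρ.tprod (ofMulAction k G G) g x) γ =
      ρ g (tensorRegularCoeff k G V x (g⁻¹ * γ)) := by
  induction x using TensorProduct.induction_on with
  | zero => simp
  | tmul v f => simp [tensorRegularCoeff]
  | add x y hx hy => simp only [map_add, Finsupp.add_apply, hx, hy]

lemma tensorRegularCoeff_mul_of_mem_invariants {ρ : Representation k G V}
    {x : V ⊗[k] MonoidAlgebra k G} (hx : x ∈ (ρ.tprod (ofMulAction k G G)).invariants)
    (g γ : G) :
    tensorRegularCoeff k G V x (g * γ) = ρ g (tensorRegularCoeff k G V x γ) := by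
  have := tensorRegularCoeff_tprod_ofMulAction ρ g x (g * γ)
  rwa [hx g, inv_mul_cancel_left] at this

lemma finsupp_eq_zero_of_equivariant [Infinite G] (ρ : Representation k G V) {c : G →₀ V}
    (hc : ∀ g γ, c (g * γ) = ρ g (c γ)) : c = 0 := by
  ext γ
  by_contra hγ
  have hsupp : Set.range (· * γ) ⊆ (c.support : Set G) := by
    rintro _ ⟨g, rfl⟩
    rw [Finset.mem_coe, Finsupp.mem_support_iff, hc,
      map_ne_zero_iff _ (ρ.apply_bijective g).injective]
    exact hγ
  exact Set.infinite_range_of_injective (mul_left_injective γ)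
    (c.support.finite_toSet.subset hsupp)

end Representation

/-- If `Γ` is an infinite group, `Λ = ℚΓ` its group algebra and `R` any `ℚΓ`-module
(given by a representation `ρ` of `Γ` on a `ℚ`-vector space `R`), then the invariants
of `R ⊗_ℚ Λ` for the diagonal action of `Γ` vanish. -/
theorem invariants_tensor_regular_eq_bot
    (Γ : Type) [Group Γ] [Infinite Γ]
    (R : Type) [AddCommGroup R] [Module ℚ R]
    (ρ : Representation ℚ Γ R) :
    (ρ.tprod (Representation.ofMulAction ℚ Γ Γ)).invariants = ⊥ := by
  refine (Submodule.eq_bot_iff _).2 fun x hx => ?_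
  have hcoeff : Representation.tensorRegularCoeff ℚ Γ R x = 0 :=
    ρ.finsupp_eq_zero_of_equivariant (Representation.tensorRegularCoeff_mul_of_mem_invariants hx)
  simpa using hcoeff
end

section
/- Let $M$ be a connected CW-complex with fundamental group $\Gamma$ and finite 3-skeleton, and let $\Lambda = \mathbb{Z}\Gamma$. Then $\pi_2(M)$ is finitely generated as a $\Lambda$-module if and only if $\Gamma$ is of type $FP_3$. -/
open MonoidAlgebra

/-- The integral group ring `Λ = ℤΓ`. -/
abbrev GrpRing (Γ : Type) [Group Γ] := MonoidAlgebra ℤ Γ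

/-- A projective resolution of the trivial `ℤΓ`-module `ℤ`:
`⋯ → P₁ → P₀ → ℤ → 0` with all `P i` projective. -/
structure ProjResolution (Γ : Type) [Group Γ] where
  P : ℕ → Type
  [acg : ∀ i, AddCommGroup (P i)]
  [mod : ∀ i, Module (GrpRing Γ) (P i)]
  dP : ∀ i, P (i + 1) →ₗ[GrpRing Γ] P i
  aug : P 0 →+ ℤ
  proj : ∀ i, Module.Projective (GrpRing Γ) (P i)
  aug_equivariant : ∀ (g : Γ) (x : P 0), aug ((single g (1 : ℤ) : GrpRing Γ) • x) = aug x
  aug_surjective : Function.Surjective aug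
  exact_aug : ∀ x : P 0, aug x = 0 ↔ x ∈ LinearMap.range (dP 0)
  exact : ∀ i, LinearMap.ker (dP i) = LinearMap.range (dP (i + 1))

attribute [instance] ProjResolution.acg ProjResolution.mod

/-- A group `Γ` is of type `FP₃` if the trivial module `ℤ` has a projective resolution
over `ℤΓ` which is finitely generated in degrees `≤ 3`. -/
def IsFP3 (Γ : Type) [Group Γ] : Prop :=
  ∃ Pres : ProjResolution Γ, ∀ i ≤ 3, Module.Finite (GrpRing Γ) (Pres.P i)

/-- A group `Γ` is of type `FP` if the trivial module `ℤ` has a finite length projective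
resolution over `ℤΓ` by finitely generated modules. -/
def IsFP (Γ : Type) [Group Γ] : Prop :=
  ∃ Pres : ProjResolution Γ, (∀ i, Module.Finite (GrpRing Γ) (Pres.P i)) ∧
    ∃ N, ∀ i, N ≤ i → Subsingleton (Pres.P i)

/-- **(Bieri–Eckmann.)**  A group `Γ` is an `r`-dimensional duality group if it is of type
`FP` and `H^i(Γ, ℤΓ) = 0` for all `i ≠ r`. -/
noncomputable def IsDualityGroup (Γ : Type) [Group Γ] (r : ℕ) : Prop :=
  IsFP Γ ∧ ∀ i, i ≠ r → Subsingleton (groupCohomology (Rep.leftRegular ℤ Γ) i)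

section ChainModel

variable (Γ : Type) [Group Γ]
variable (C : ℕ → Type) [∀ i, AddCommGroup (C i)] [∀ i, Module (GrpRing Γ) (C i)]
variable (d : ∀ i, C (i + 1) →ₗ[GrpRing Γ] C i)

/-- `π₂(M) = H₂(M̃) = H₂(C)`, as a left `ℤΓ`-module. -/
noncomputable def pi2Model :=
  LinearMap.ker (d 1) ⧸
    (Submodule.comap (LinearMap.ker (d 1)).subtype (LinearMap.range (d 2)))

noncomputable instance : AddCommGroup (pi2Model Γ C d) := by
  unfold pi2Model; infer_instance

noncomputable instance : Module (GrpRing Γ) (pi2Model Γ C d) := by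
  unfold pi2Model; infer_instance

end ChainModel

/-!
Write `K = ker (C₂ → C₁)`. Then `π₂(M) = K / im (C₃ → C₂)` and `C₃` is finitely generated, so
`π₂(M)` is finitely generated iff `K` is. If `K` is, finitely many generators give a finitely
generated free module `F → C₂` with image `K`, and `F → C₂ → C₁ → C₀ → ℤ` continues by free
syzygies to a resolution witnessing `FP₃`. Conversely, for a projective resolution `P` of finite
type up to degree 3, Schanuel's lemma applied three times gives
`K ⊕ P₂ ⊕ C₁ ⊕ P₀ ≅ ker (P₂ → P₁) ⊕ C₂ ⊕ P₁ ⊕ C₀`, and `ker (P₂ → P₁)` is the image of `P₃`.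
-/

section Schanuel

open LinearMap

variable {R : Type*} [Ring R]
variable {A B M K X P : Type*} [AddCommGroup A] [Module R A] [AddCommGroup B] [Module R B]
  [AddCommGroup M] [Module R M] [AddCommGroup K] [Module R K] [AddCommGroup X] [Module R X]
  [AddCommGroup P] [Module R P]

theorem Function.Exact.nonempty_linearEquiv_prod_of_projective {i : K →ₗ[R] X} {π : X →ₗ[R] P}
    (hex : Function.Exact i π) (hi : Function.Injective i) (hπ : Function.Surjective π)
    [Module.Projective R P] : Nonempty (X ≃ₗ[R] (K × P)) :=
  have ⟨s, hs⟩ := Module.projective_lifting_property π LinearMap.id hπ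
  ⟨(hex.splitSurjectiveEquiv hi ⟨s, hs⟩).1⟩

def fiberProduct (f : A →ₗ[R] M) (g : B →ₗ[R] M) : Submodule R (A × B) :=
  eqLocus (f ∘ₗ fst R A B) (g ∘ₗ snd R A B)

theorem mem_fiberProduct {f : A →ₗ[R] M} {g : B →ₗ[R] M} {p : A × B} :
    p ∈ fiberProduct f g ↔ f p.1 = g p.2 :=
  mem_eqLocus

/-- As `f` is surjective, `0 → ker f → A ×_M B → B → 0` is exact; it splits as `B` is projective. -/
theorem nonempty_fiberProduct_equiv_ker_prod (f : A →ₗ[R] M) (g : B →ₗ[R] M)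
    (hf : Function.Surjective f) [Module.Projective R B] :
    Nonempty (fiberProduct f g ≃ₗ[R] (ker f × B)) := by
  let i : ker f →ₗ[R] fiberProduct f g :=
    codRestrict _ (inl R A B ∘ₗ (ker f).subtype) fun a => by simp [mem_fiberProduct]
  let π : fiberProduct f g →ₗ[R] B := snd R A B ∘ₗ (fiberProduct f g).subtype
  refine Function.Exact.nonempty_linearEquiv_prod_of_projective (i := i) (π := π) ?_ ?_ ?_
  · intro y
    constructor
    · intro (hb : y.1.2 = 0)
      have hy := mem_fiberProduct.1 y.2
      rw [hb, map_zero] at hy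
      exact ⟨⟨y.1.1, hy⟩, Subtype.ext (Prod.ext rfl hb.symm)⟩
    · rintro ⟨a, rfl⟩
      rfl
  · intro a a' h
    exact Subtype.ext (congrArg (fun p => p.1.1) h)
  · intro b
    obtain ⟨a, ha⟩ := hf (g b)
    exact ⟨⟨(a, b), mem_fiberProduct.2 ha⟩, rfl⟩

def fiberProductComm (f : A →ₗ[R] M) (g : B →ₗ[R] M) :
    fiberProduct f g ≃ₗ[R] fiberProduct g f :=
  (LinearEquiv.prodComm R A B).ofSubmodules _ _ <| by
    ext ⟨b, a⟩
    simp [Submodule.mem_map_equiv, mem_fiberProduct, eq_comm]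

theorem schanuel {f : A →ₗ[R] M} {g : B →ₗ[R] M} (hf : Function.Surjective f)
    (hg : Function.Surjective g) [Module.Projective R A] [Module.Projective R B] :
    Nonempty ((ker f × B) ≃ₗ[R] (ker g × A)) :=
  have ⟨eB⟩ := nonempty_fiberProduct_equiv_ker_prod f g hf
  have ⟨eA⟩ := nonempty_fiberProduct_equiv_ker_prod g f hg
  ⟨eB.symm ≪≫ₗ fiberProductComm f g ≪≫ₗ eA⟩

noncomputable def LinearMap.kerProdMapIdEquiv (f : A →ₗ[R] M) :
    ker (f.prodMap (LinearMap.id : B →ₗ[R] B)) ≃ₗ[R] ker f :=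
  (LinearEquiv.ofEq _ _ (by rw [ker_prodMap, ker_id, Submodule.map_inl])).trans
    (Submodule.equivMapOfInjective _ inl_injective _).symm

variable {N A' B' : Type*} [AddCommGroup N] [Module R N] [AddCommGroup A'] [Module R A']
  [AddCommGroup B'] [Module R B']

/-- One step of the generalized Schanuel lemma: `p` and `q` are the next terms of two projective
resolutions of stably isomorphic modules `U` and `V`. -/
theorem schanuel_succ {U : Submodule R M} {V : Submodule R N} (e : (U × B) ≃ₗ[R] (V × A))
    {p : A' →ₗ[R] M} {q : B' →ₗ[R] N} (hp : range p = U) (hq : range q = V)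
    [Module.Projective R A] [Module.Projective R B] [Module.Projective R A']
    [Module.Projective R B'] : Nonempty ((ker p × (B' × A)) ≃ₗ[R] (ker q × (A' × B))) := by
  let p' : A' →ₗ[R] U := codRestrict U p fun a => hp ▸ mem_range_self p a
  let q' : B' →ₗ[R] V := codRestrict V q fun b => hq ▸ mem_range_self q b
  have hp' : Function.Surjective p' := by
    rw [← range_eq_top, range_codRestrict, hp, Submodule.comap_subtype_self]
  have hq' : Function.Surjective q' := by
    rw [← range_eq_top, range_codRestrict, hq, Submodule.comap_subtype_self]
  obtain ⟨e'⟩ := schanuel (f := p'.prodMap (LinearMap.id : B →ₗ[R] B))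
    (g := e.symm.toLinearMap ∘ₗ q'.prodMap (LinearMap.id : A →ₗ[R] A))
    (hp'.prodMap Function.surjective_id)
    (e.symm.surjective.comp (hq'.prodMap Function.surjective_id))
  rw [LinearEquiv.ker_comp] at e'
  have eP : ker (p'.prodMap (LinearMap.id : B →ₗ[R] B)) ≃ₗ[R] ker p :=
    p'.kerProdMapIdEquiv.trans (.ofEq _ _ (ker_codRestrict _ _ _))
  have eQ : ker (q'.prodMap (LinearMap.id : A →ₗ[R] A)) ≃ₗ[R] ker q :=
    q'.kerProdMapIdEquiv.trans (.ofEq _ _ (ker_codRestrict _ _ _))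
  exact ⟨(eP.prodCongr (.refl R _)).symm ≪≫ₗ e' ≪≫ₗ eQ.prodCongr (.refl R _)⟩

end Schanuel

noncomputable def augmentation (Γ : Type) [Group Γ] : GrpRing Γ →+* ℤ :=
  (MonoidAlgebra.lift ℤ ℤ Γ 1).toRingHom

@[simp] theorem augmentation_single (Γ : Type) [Group Γ] (g : Γ) (a : ℤ) :
    augmentation Γ (single g a) = a := by
  simp [augmentation, MonoidAlgebra.lift_single]

def TrivialInt (Γ : Type) [Group Γ] : Type := ℤ

instance (Γ : Type) [Group Γ] : AddCommGroup (TrivialInt Γ) := inferInstanceAs (AddCommGroup ℤ)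

noncomputable instance (Γ : Type) [Group Γ] : Module (GrpRing Γ) (TrivialInt Γ) :=
  Module.compHom ℤ (augmentation Γ)

noncomputable def AddMonoidHom.toTrivialInt {Γ : Type} [Group Γ] {A : Type} [AddCommGroup A]
    [Module (GrpRing Γ) A] (φ : A →+ ℤ)
    (hφ : ∀ (g : Γ) (x : A), φ ((MonoidAlgebra.single g (1 : ℤ) : GrpRing Γ) • x) = φ x) :
    A →ₗ[GrpRing Γ] TrivialInt Γ where
  toFun x := (φ x : TrivialInt Γ)
  map_add' := φ.map_add
  map_smul' r x := by
    change φ (r • x) = augmentation Γ r * φ x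
    induction r using MonoidAlgebra.induction_on with
    | of g => simpa using hφ g x
    | add p q hp hq => rw [add_smul, φ.map_add, hp, hq, map_add, add_mul]
    | smul a p hp =>
      rw [smul_assoc, map_zsmul, hp, map_zsmul, smul_eq_mul, smul_eq_mul, mul_assoc]

noncomputable section SyzygyTower

open LinearMap

variable {R : Type} [Ring R]

/-- At level `n` the pair `⟨X, Z⟩` is a syzygy `Z` inside the free module `X →₀ R`; the next
level is free on the elements of `Z`. -/
def syzygyTower (ι : Type) (Z : Submodule R (ι →₀ R)) : ℕ → Σ X : Type, Submodule R (X →₀ R)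
  | 0 => ⟨ι, Z⟩
  | n + 1 => ⟨(syzygyTower ι Z n).2,
      ker (Finsupp.linearCombination R (Subtype.val : (syzygyTower ι Z n).2 → _))⟩

def syzygyTowerMap (ι : Type) (Z : Submodule R (ι →₀ R)) (n : ℕ) :
    ((syzygyTower ι Z n).2 →₀ R) →ₗ[R] ((syzygyTower ι Z n).1 →₀ R) :=
  Finsupp.linearCombination R Subtype.val

theorem range_syzygyTowerMap (ι : Type) (Z : Submodule R (ι →₀ R)) (n : ℕ) :
    range (syzygyTowerMap ι Z n) = (syzygyTower ι Z n).2 :=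
  (Finsupp.range_linearCombination R).trans <| by rw [Subtype.range_coe, Submodule.span_eq]

end SyzygyTower

noncomputable section Extension

open LinearMap

variable (R : Type) [Ring R] (C : ℕ → Type) [∀ i, AddCommGroup (C i)] [∀ i, Module R (C i)]
variable {ι : Type} (v : ι → C 2)

def extendObj : ℕ → Type
  | 0 => C 0
  | 1 => C 1
  | 2 => C 2
  | n + 3 => (syzygyTower ι (ker (Finsupp.linearCombination R v)) n).1 →₀ R

instance extendObj.addCommGroup : ∀ i, AddCommGroup (extendObj R C v i)
  | 0 => inferInstanceAs (AddCommGroup (C 0))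
  | 1 => inferInstanceAs (AddCommGroup (C 1))
  | 2 => inferInstanceAs (AddCommGroup (C 2))
  | _ + 3 => Finsupp.instAddCommGroup

instance extendObj.module : ∀ i, Module R (extendObj R C v i)
  | 0 => inferInstanceAs (Module R (C 0))
  | 1 => inferInstanceAs (Module R (C 1))
  | 2 => inferInstanceAs (Module R (C 2))
  | _ + 3 => Finsupp.module _ _

instance extendObj.projective [∀ i, Module.Projective R (C i)] :
    ∀ i, Module.Projective R (extendObj R C v i)
  | 0 => inferInstanceAs (Module.Projective R (C 0))
  | 1 => inferInstanceAs (Module.Projective R (C 1))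
  | 2 => inferInstanceAs (Module.Projective R (C 2))
  | n + 3 => inferInstanceAs (Module.Projective R
      ((syzygyTower ι (ker (Finsupp.linearCombination R v)) n).1 →₀ R))

variable (d : ∀ i, C (i + 1) →ₗ[R] C i)

def extendMap : ∀ i, extendObj R C v (i + 1) →ₗ[R] extendObj R C v i
  | 0 => d 0
  | 1 => d 1
  | 2 => Finsupp.linearCombination R v
  | n + 3 => syzygyTowerMap ι _ n

theorem ker_extendMap_eq_range (hex : ker (d 0) = range (d 1))
    (hv : ker (d 1) = Submodule.span R (Set.range v)) :
    ∀ i, ker (extendMap R C v d i) = range (extendMap R C v d (i + 1))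
  | 0 => hex
  | 1 => hv.trans (Finsupp.range_linearCombination R).symm
  | 2 => (range_syzygyTowerMap ι _ 0).symm
  | n + 3 => (range_syzygyTowerMap ι _ (n + 1)).symm

end Extension

section ChainComplex

open LinearMap

theorem finite_pi2Model_iff_fg_ker {Γ : Type} [Group Γ] {C : ℕ → Type}
    [∀ i, AddCommGroup (C i)] [∀ i, Module (GrpRing Γ) (C i)]
    (d : ∀ i, C (i + 1) →ₗ[GrpRing Γ] C i) (hdd : (d 1).comp (d 2) = 0)
    [Module.Finite (GrpRing Γ) (C 3)] :
    Module.Finite (GrpRing Γ) (pi2Model Γ C d) ↔ (ker (d 1)).FG := by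
  let N := Submodule.comap (ker (d 1)).subtype (range (d 2))
  have hd2 : ∀ x, d 2 x ∈ ker (d 1) := fun x => congr($hdd x)
  have : Module.Finite (GrpRing Γ) N := by
    have := Module.Finite.range (codRestrict (ker (d 1)) (d 2) hd2)
    rwa [range_codRestrict] at this
  rw [← Module.Finite.iff_fg]
  refine ⟨fun h => ?_, fun _ => Module.Finite.quotient _ N⟩
  have : Module.Finite (GrpRing Γ) (ker (d 1) ⧸ N) := h
  exact .of_submodule_quotient N

theorem isFP3_of_fg_ker {Γ : Type} [Group Γ] {C : ℕ → Type} [∀ i, AddCommGroup (C i)]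
    [∀ i, Module (GrpRing Γ) (C i)] [∀ i, Module.Projective (GrpRing Γ) (C i)]
    (hfin : ∀ i ≤ 2, Module.Finite (GrpRing Γ) (C i)) {d : ∀ i, C (i + 1) →ₗ[GrpRing Γ] C i}
    (hex : ker (d 0) = range (d 1)) (ε : C 0 →+ ℤ)
    (hεequiv : ∀ (g : Γ) (x : C 0), ε ((single g (1 : ℤ) : GrpRing Γ) • x) = ε x)
    (hεsurj : Function.Surjective ε) (hεker : ∀ x : C 0, ε x = 0 ↔ x ∈ range (d 0))
    (hK : (ker (d 1)).FG) : IsFP3 Γ := by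
  obtain ⟨S, hS⟩ := hK
  let v : S → C 2 := Subtype.val
  refine ⟨{
    P := extendObj (GrpRing Γ) C v
    dP := extendMap (GrpRing Γ) C v d
    aug := ε
    proj := extendObj.projective _ C v
    aug_equivariant := hεequiv
    aug_surjective := hεsurj
    exact_aug := hεker
    exact := ker_extendMap_eq_range _ C v d hex (by rw [Subtype.range_coe, hS]) }, ?_⟩
  intro i hi
  interval_cases i
  · exact hfin 0 (by norm_num)
  · exact hfin 1 (by norm_num)
  · exact hfin 2 le_rfl
  · exact Module.Finite.finsupp (ι := S)

theorem fg_ker_of_isFP3 {Γ : Type} [Group Γ] {C : ℕ → Type} [∀ i, AddCommGroup (C i)]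
    [∀ i, Module (GrpRing Γ) (C i)] [∀ i, Module.Projective (GrpRing Γ) (C i)]
    (hfin : ∀ i ≤ 2, Module.Finite (GrpRing Γ) (C i)) {d : ∀ i, C (i + 1) →ₗ[GrpRing Γ] C i}
    (hex : ker (d 0) = range (d 1)) (ε : C 0 →+ ℤ)
    (hεequiv : ∀ (g : Γ) (x : C 0), ε ((single g (1 : ℤ) : GrpRing Γ) • x) = ε x)
    (hεsurj : Function.Surjective ε) (hεker : ∀ x : C 0, ε x = 0 ↔ x ∈ range (d 0))
    (hFP3 : IsFP3 Γ) : (ker (d 1)).FG := by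
  obtain ⟨P, hPfin⟩ := hFP3
  have := P.proj
  obtain ⟨e₀⟩ := schanuel (f := ε.toTrivialInt hεequiv) (g := P.aug.toTrivialInt P.aug_equivariant)
    hεsurj P.aug_surjective
  obtain ⟨e₁⟩ := schanuel_succ e₀ (p := d 0) (q := P.dP 0)
    (by ext x; exact (hεker x).symm) (by ext x; exact (P.exact_aug x).symm)
  obtain ⟨e₂⟩ : Nonempty ((ker (d 1) × (P.P 2 × (C 1 × P.P 0))) ≃ₗ[GrpRing Γ]
      (ker (P.dP 1) × (C 2 × (P.P 1 × C 0)))) :=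
    schanuel_succ e₁ hex.symm (P.exact 0).symm
  have := hfin 0 (by norm_num)
  have := hfin 2 le_rfl
  have := hPfin 1 (by norm_num)
  have := hPfin 3 le_rfl
  have : Module.Finite (GrpRing Γ) (ker (P.dP 1)) := by
    rw [P.exact 1]
    exact Module.Finite.range _
  have := Module.Finite.equiv e₂.symm
  exact Module.Finite.iff_fg.1 (Module.Finite.of_surjective
    (fst (GrpRing Γ) (ker (d 1)) (P.P 2 × C 1 × P.P 0)) fst_surjective)

end ChainComplex

/-- `C` is the cellular chain complex of the universal cover of `M`, and `ε` its augmentation. -/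
theorem pi2_finitely_generated_iff_FP3
    (Γ : Type) [Group Γ]
    (C : ℕ → Type) [∀ i, AddCommGroup (C i)] [∀ i, Module (GrpRing Γ) (C i)]
    (d : ∀ i, C (i + 1) →ₗ[GrpRing Γ] C i)
    (hdd : ∀ i, (d i).comp (d (i + 1)) = 0)
    (hfree : ∀ i, Module.Free (GrpRing Γ) (C i))
    -- the 3-skeleton of `M` is finite:
    (hfg3 : ∀ i ≤ 3, Module.Finite (GrpRing Γ) (C i))
    (ε : C 0 →+ ℤ)
    (hεequiv : ∀ (g : Γ) (x : C 0), ε ((single g (1 : ℤ) : GrpRing Γ) • x) = ε x)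
    (hεsurj : Function.Surjective ε)
    (hεker : ∀ x : C 0, ε x = 0 ↔ ∃ y, d 0 y = x)
    (hH1 : ∀ x : C 1, d 0 x = 0 → ∃ y, d 1 y = x)
    :
    Module.Finite (GrpRing Γ) (pi2Model Γ C d) ↔ IsFP3 Γ := by
  have : ∀ i, Module.Projective (GrpRing Γ) (C i) := fun i => have := hfree i; inferInstance
  have : Module.Finite (GrpRing Γ) (C 3) := hfg3 3 le_rfl
  have hfin : ∀ i ≤ 2, Module.Finite (GrpRing Γ) (C i) := fun i hi => hfg3 i (by omega)
  have hex : LinearMap.ker (d 0) = LinearMap.range (d 1) :=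
    le_antisymm (fun x hx => hH1 x hx) (LinearMap.range_le_ker_iff.2 (hdd 0))
  rw [finite_pi2Model_iff_fg_ker d (hdd 1)]
  exact ⟨isFP3_of_fg_ker hfin hex ε hεequiv hεsurj hεker,
    fg_ker_of_isFP3 hfin hex ε hεequiv hεsurj hεker⟩
end
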